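/- arXiv:2307.08168 — 2 statements merged into one kernel-verified Lean document; each statement's English description precedes it below -/
import Mathlib

section
/- For the scalar system x_{t+1} = a x_t + b u_t with open-loop parameters θ = (u_0,...,u_{T-1}) and quadratic reward R(x) = −x²/2 summed over t = 0,...,T, the (t,t) diagonal entry of the Hessian of the total reward J(θ; x_0) equals −Σ_{s=t+1}^{T} (a^{s-t-1} b)², and hence the operator norm of the Hessian is at least b² (a^{2(T-t-1)} − 1)/(a² − 1) for a ≠ 1, which grows exponentially in T when a > 1. -/
/-- State of the scalar system `x_{t+1} = a x_t + b u_t` under open-loop inputs `θ`. -/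
noncomputable def xtraj (a b x0 : ℝ) (θ : ℕ → ℝ) (t : ℕ) : ℝ :=
  a ^ t * x0 + ∑ s ∈ Finset.range t, a ^ (t - 1 - s) * b * θ s

/-- Total reward `J(θ;x₀) = −(1/2) Σ_{t=0}^{T} x_t²`. -/
noncomputable def Jobj (T : ℕ) (a b x0 : ℝ) (θ : ℕ → ℝ) : ℝ :=
  -(1 / 2) * ∑ t ∈ Finset.range (T + 1), (xtraj a b x0 θ t) ^ 2

/-!
Changing the single input `u_t` to `v` moves every later state affinely in `v`, with slope the
impulse response `a^(s-t-1) b` at time `s > t`. Hence `v ↦ J` is a quadratic polynomial whose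
second derivative is minus the energy of the impulse response, which after reindexing is
`b²` times a geometric sum in `a²`; truncating that sum by one term gives the closed-form bound.
-/

open Finset

noncomputable def impulseResponse (a b : ℝ) (t s : ℕ) : ℝ :=
  if t < s then a ^ (s - 1 - t) * b else 0

lemma xtraj_update (a b x0 : ℝ) (θ : ℕ → ℝ) (t s : ℕ) (v : ℝ) :
    xtraj a b x0 (Function.update θ t v) s =
      xtraj a b x0 (Function.update θ t 0) s + impulseResponse a b t s * v := by
  have hterm : ∀ r, a ^ (s - 1 - r) * b * Function.update θ t v r =
      a ^ (s - 1 - r) * b * Function.update θ t 0 r +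
        if r = t then a ^ (s - 1 - r) * b * v else 0 := by
    intro r
    by_cases h : r = t
    · subst h; simp
    · simp [h]
  simp only [xtraj, impulseResponse, hterm, sum_add_distrib, sum_ite_eq', mem_range]
  split_ifs <;> ring

lemma hasDerivAt_sum_sq_affine {ι : Type*} (S : Finset ι) (K D : ι → ℝ) (v : ℝ) :
    HasDerivAt (fun w => ∑ i ∈ S, (K i + D i * w) ^ 2)
      (∑ i ∈ S, 2 * D i * (K i + D i * v)) v := by
  refine HasDerivAt.fun_sum fun i _ => ?_
  have hlin : HasDerivAt (fun w => K i + D i * w) (D i) v :=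
    (hasDerivAt_const_mul (D i)).const_add (K i)
  exact (hlin.fun_pow 2).congr_deriv (by push_cast; ring)

lemma deriv_deriv_sum_sq_affine {ι : Type*} (S : Finset ι) (K D : ι → ℝ) (v : ℝ) :
    deriv (deriv fun w => ∑ i ∈ S, (K i + D i * w) ^ 2) v = 2 * ∑ i ∈ S, D i ^ 2 := by
  have hfirst : deriv (fun w => ∑ i ∈ S, (K i + D i * w) ^ 2) =
      fun w => ∑ i ∈ S, 2 * D i * (K i + D i * w) :=
    funext fun w => (hasDerivAt_sum_sq_affine S K D w).deriv
  rw [hfirst, mul_sum]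
  refine (HasDerivAt.fun_sum fun i _ => ?_).deriv
  exact (((hasDerivAt_const_mul (D i)).const_add (K i)).const_mul (2 * D i)).congr_deriv
    (by ring)

lemma sum_range_impulseResponse_sq (a b : ℝ) (t T : ℕ) :
    ∑ s ∈ range (T + 1), impulseResponse a b t s ^ 2 =
      ∑ s ∈ Icc (t + 1) T, (a ^ (s - t - 1) * b) ^ 2 := by
  have hsupp : (range (T + 1)).filter (t < ·) = Icc (t + 1) T := by
    ext s; simp only [mem_filter, mem_range, mem_Icc]; omega
  simp only [impulseResponse, ite_pow, zero_pow two_ne_zero, ← sum_filter, hsupp,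
    Nat.sub_right_comm _ 1 t]

lemma deriv_deriv_Jobj_update (T : ℕ) (a b x0 : ℝ) (θ : ℕ → ℝ) (t : ℕ) (v : ℝ) :
    deriv (deriv fun w => Jobj T a b x0 (Function.update θ t w)) v =
      -∑ s ∈ Icc (t + 1) T, (a ^ (s - t - 1) * b) ^ 2 := by
  have hquad : (fun w => Jobj T a b x0 (Function.update θ t w)) = fun w =>
      -(1 / 2) * ∑ s ∈ range (T + 1),
        (xtraj a b x0 (Function.update θ t 0) s + impulseResponse a b t s * w) ^ 2 := by
    funext w
    simp only [Jobj]
    congr 2 with s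
    rw [xtraj_update]
  simp only [hquad, deriv_const_mul_field', deriv_deriv_sum_sq_affine,
    sum_range_impulseResponse_sq]
  ring

lemma sum_Icc_impulse_sq_eq_geom_sum (a b : ℝ) (t T : ℕ) :
    ∑ s ∈ Icc (t + 1) T, (a ^ (s - t - 1) * b) ^ 2 = b ^ 2 * ∑ k ∈ range (T - t), (a ^ 2) ^ k := by
  rw [← Ico_add_one_right_eq_Icc, sum_Ico_eq_sum_range, show T + 1 - (t + 1) = T - t by omega,
    mul_sum]
  refine sum_congr rfl fun k _ => ?_
  rw [show t + 1 + k - t - 1 = k by omega]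
  ring

lemma geom_quotient_le_geom_sum {q : ℝ} (hq : 0 ≤ q) {n m : ℕ} (hnm : n ≤ m) :
    (q ^ n - 1) / (q - 1) ≤ ∑ k ∈ range m, q ^ k := by
  rcases eq_or_ne q 1 with rfl | hq1
  · simp -- the left side is the junk value `0 / 0 = 0`
  · rw [← geom_sum_eq hq1]
    exact sum_le_sum_of_subset_of_nonneg (range_subset_range.2 hnm) fun k _ _ => by positivity

theorem stmt7_general (T : ℕ) (a b x0 : ℝ) (θ : ℕ → ℝ) (t : ℕ) :
    deriv (deriv (fun v => Jobj T a b x0 (Function.update θ t v))) (θ t) =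
      -(∑ s ∈ Finset.Icc (t + 1) T, (a ^ (s - t - 1) * b) ^ 2) ∧
    (a ≠ 1 →
      ∑ s ∈ Finset.Icc (t + 1) T, (a ^ (s - t - 1) * b) ^ 2 ≥
        b ^ 2 * (a ^ (2 * (T - t - 1)) - 1) / (a ^ 2 - 1)) := by
  refine ⟨deriv_deriv_Jobj_update T a b x0 θ t (θ t), fun _ => ?_⟩
  rw [sum_Icc_impulse_sq_eq_geom_sum, ge_iff_le, pow_mul, mul_div_assoc]
  exact mul_le_mul_of_nonneg_left (geom_quotient_le_geom_sum (sq_nonneg a) (by omega))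
    (sq_nonneg b)

/-- The `(t,t)` diagonal entry of the Hessian of `J` equals `−Σ_{s=t+1}^{T} (a^(s-t-1) b)²`,
whose magnitude is at least `b² (a^(2(T-t-1)) − 1)/(a² − 1)` for `a ≠ 1` (which grows
exponentially in `T` when `a > 1`); the operator norm of the Hessian dominates this entry. -/
theorem stmt7 (T : ℕ) (a b x0 : ℝ) (θ : ℕ → ℝ) (t : ℕ) (ht : t < T) :
    deriv (deriv (fun v => Jobj T a b x0 (Function.update θ t v))) (θ t) =
      -(∑ s ∈ Finset.Icc (t + 1) T, (a ^ (s - t - 1) * b) ^ 2) ∧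
    (a ≠ 1 →
      ∑ s ∈ Finset.Icc (t + 1) T, (a ^ (s - t - 1) * b) ^ 2 ≥
        b ^ 2 * (a ^ (2 * (T - t - 1)) - 1) / (a ^ 2 - 1)) :=
  stmt7_general T a b x0 θ t
end

section
/- Gradient norm bound: under the assumptions that ‖∇R(x_t)‖ ≤ L, ‖B_t‖ ≤ L, ‖∂π_t^θ/∂θ‖ ≤ L, and ‖Φ_{t,t'}‖ ≤ Mα^{t-t'} for all t > t', there exists β > 0 depending only on L and M such that ‖∇J_T(θ;x_0)‖ = ‖Σ_{t=1}^{T}∇R(x_t)·Σ_{t'=0}^{t-1}Φ_{t,t'}B_{t'}(∂π_{t'}^θ/∂θ)‖ is at most βT²α^T if α > 1, βT² if α = 1, and βT if 0 < α < 1. -/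
open Finset

/-!
By submultiplicativity of the operator norm each term `Φ_{t,t'} B_{t'} ∂π_{t'}` has norm at most
`L² M α^(t-t')`, so the gradient is bounded by `L³ M Σ_{t=1}^T Σ_{t'<t} α^(t-t')`. For `α ≥ 1` every
power is at most `α^T` and there are at most `T²` of them; for `α < 1` each inner sum is a partial
geometric series, bounded by `(1 - α)⁻¹`.
-/

section OperatorBound

variable {𝕜 E F G H : Type*} [NontriviallyNormedField 𝕜]
  [SeminormedAddCommGroup E] [NormedSpace 𝕜 E] [SeminormedAddCommGroup F] [NormedSpace 𝕜 F]
  [SeminormedAddCommGroup G] [NormedSpace 𝕜 G] [SeminormedAddCommGroup H] [NormedSpace 𝕜 H]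

theorem ContinuousLinearMap.norm_comp_comp_le (f : G →L[𝕜] H) (g : F →L[𝕜] G) (h : E →L[𝕜] F) :
    ‖f.comp (g.comp h)‖ ≤ ‖f‖ * (‖g‖ * ‖h‖) :=
  (f.opNorm_comp_le _).trans (by gcongr; exact g.opNorm_comp_le h)

theorem norm_sum_comp_sum_range_le (s : Finset ℕ) (L M α : ℝ) (R : ℕ → G →L[𝕜] H)
    (Φ : ℕ → ℕ → G →L[𝕜] G) (B : ℕ → F →L[𝕜] G) (D : ℕ → E →L[𝕜] F)
    (hR : ∀ t, ‖R t‖ ≤ L) (hB : ∀ t, ‖B t‖ ≤ L) (hD : ∀ t, ‖D t‖ ≤ L)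
    (hΦ : ∀ t t' : ℕ, t' < t → ‖Φ t t'‖ ≤ M * α ^ (t - t')) :
    ‖∑ t ∈ s, (R t).comp (∑ t' ∈ range t, (Φ t t').comp ((B t').comp (D t')))‖
      ≤ L ^ 3 * M * ∑ t ∈ s, ∑ t' ∈ range t, α ^ (t - t') := by
  have hL : 0 ≤ L := (norm_nonneg _).trans (hB 0)
  have inner (t : ℕ) : ‖∑ t' ∈ range t, (Φ t t').comp ((B t').comp (D t'))‖
      ≤ ∑ t' ∈ range t, L ^ 2 * M * α ^ (t - t') := by
    refine norm_sum_le_of_le _ fun t' ht' => ?_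
    have hΦt := hΦ t t' (mem_range.mp ht')
    calc ‖(Φ t t').comp ((B t').comp (D t'))‖ ≤ ‖Φ t t'‖ * (‖B t'‖ * ‖D t'‖) :=
          ContinuousLinearMap.norm_comp_comp_le _ _ _
      _ ≤ M * α ^ (t - t') * (L * L) := by
          gcongr
          exacts [(norm_nonneg _).trans hΦt, hB t', hD t']
      _ = L ^ 2 * M * α ^ (t - t') := by ring
  rw [mul_sum]
  refine norm_sum_le_of_le _ fun t _ => ?_
  calc ‖(R t).comp (∑ t' ∈ range t, (Φ t t').comp ((B t').comp (D t')))‖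
      ≤ L * ∑ t' ∈ range t, L ^ 2 * M * α ^ (t - t') :=
        ((R t).opNorm_comp_le _).trans (mul_le_mul (hR t) (inner t) (norm_nonneg _) hL)
    _ = L ^ 3 * M * ∑ t' ∈ range t, α ^ (t - t') := by
        rw [mul_sum, mul_sum]
        exact sum_congr rfl fun _ _ => by ring

end OperatorBound

theorem sum_Icc_sum_range_pow_sub_le_of_one_le {α : ℝ} (hα : 1 ≤ α) (T : ℕ) :
    ∑ t ∈ Icc 1 T, ∑ t' ∈ range t, α ^ (t - t') ≤ T ^ 2 * α ^ T := by
  have inner (t : ℕ) (ht : t ∈ Icc 1 T) : ∑ t' ∈ range t, α ^ (t - t') ≤ T * α ^ T := by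
    have htT : t ≤ T := (mem_Icc.mp ht).2
    calc ∑ t' ∈ range t, α ^ (t - t') ≤ (range t).card • α ^ T :=
          sum_le_card_nsmul _ _ _ fun t' _ => pow_le_pow_right₀ hα (by omega)
      _ = t * α ^ T := by rw [card_range, nsmul_eq_mul]
      _ ≤ T * α ^ T := by gcongr
  calc ∑ t ∈ Icc 1 T, ∑ t' ∈ range t, α ^ (t - t') ≤ (Icc 1 T).card • (T * α ^ T) :=
        sum_le_card_nsmul _ _ _ inner
    _ = T ^ 2 * α ^ T := by rw [Nat.card_Icc, Nat.add_sub_cancel, nsmul_eq_mul]; ring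

theorem sum_range_pow_sub_le_of_lt_one {α : ℝ} (h0 : 0 ≤ α) (h1 : α < 1) (t : ℕ) :
    ∑ t' ∈ range t, α ^ (t - t') ≤ (1 - α)⁻¹ :=
  calc ∑ t' ∈ range t, α ^ (t - t') ≤ ∑ t' ∈ range t, α ^ (t - 1 - t') :=
        sum_le_sum fun t' _ => pow_le_pow_of_le_one h0 h1.le (by omega)
    _ = ∑ i ∈ Ico 0 t, α ^ i := by rw [sum_range_reflect (α ^ ·) t, range_eq_Ico]
    _ ≤ (1 - α)⁻¹ := by simpa using geom_sum_Ico_le_of_lt_one (m := 0) (n := t) h0 h1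

theorem sum_Icc_sum_range_pow_sub_le_of_lt_one {α : ℝ} (h0 : 0 ≤ α) (h1 : α < 1) (T : ℕ) :
    ∑ t ∈ Icc 1 T, ∑ t' ∈ range t, α ^ (t - t') ≤ (1 - α)⁻¹ * T :=
  calc ∑ t ∈ Icc 1 T, ∑ t' ∈ range t, α ^ (t - t') ≤ (Icc 1 T).card • (1 - α)⁻¹ :=
        sum_le_card_nsmul _ _ _ fun t _ => sum_range_pow_sub_le_of_lt_one h0 h1 t
    _ = (1 - α)⁻¹ * T := by rw [Nat.card_Icc, Nat.add_sub_cancel, nsmul_eq_mul, mul_comm]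

/-- Gradient norm bound: under norm bounds on `∇R`, `B`, `∂π/∂θ` and exponential
bounds `‖Φ_{t,t'}‖ ≤ M α^(t-t')`, the policy gradient
`Σ_{t=1}^{T} ∇R(x_t) Σ_{t'=0}^{t-1} Φ_{t,t'} B_{t'} (∂π_{t'}^θ/∂θ)` has norm at most
`β T² α^T` if `α > 1`, `β T²` if `α = 1`, and `β T` if `0 < α < 1`. -/
theorem stmt12 (n m p : ℕ) (L M α : ℝ) (hL : 0 < L) (hM : 0 < M) (hα : 0 < α)
    (gradR : ℕ → EuclideanSpace ℝ (Fin n) →L[ℝ] ℝ)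
    (Φ : ℕ → ℕ → (EuclideanSpace ℝ (Fin n) →L[ℝ] EuclideanSpace ℝ (Fin n)))
    (B : ℕ → EuclideanSpace ℝ (Fin m) →L[ℝ] EuclideanSpace ℝ (Fin n))
    (Dπ : ℕ → EuclideanSpace ℝ (Fin p) →L[ℝ] EuclideanSpace ℝ (Fin m))
    (hgradR : ∀ t, ‖gradR t‖ ≤ L) (hB : ∀ t, ‖B t‖ ≤ L) (hDπ : ∀ t, ‖Dπ t‖ ≤ L)
    (hΦ : ∀ t t' : ℕ, t' < t → ‖Φ t t'‖ ≤ M * α ^ (t - t')) :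
    ∃ β > 0, ∀ T : ℕ,
      (1 < α →
        ‖∑ t ∈ Icc 1 T, (gradR t).comp
            (∑ t' ∈ range t, (Φ t t').comp ((B t').comp (Dπ t')))‖ ≤ β * T ^ 2 * α ^ T) ∧
      (α = 1 →
        ‖∑ t ∈ Icc 1 T, (gradR t).comp
            (∑ t' ∈ range t, (Φ t t').comp ((B t').comp (Dπ t')))‖ ≤ β * T ^ 2) ∧
      (α < 1 →
        ‖∑ t ∈ Icc 1 T, (gradR t).comp
            (∑ t' ∈ range t, (Φ t t').comp ((B t').comp (Dπ t')))‖ ≤ β * T) := by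
  have hbound (T : ℕ) := norm_sum_comp_sum_range_le (Icc 1 T) L M α gradR Φ B Dπ hgradR hB hDπ hΦ
  have hC : 0 < L ^ 3 * M := by positivity
  rcases le_or_gt 1 α with h1 | h1
  · have hgrowth (T : ℕ) : ‖∑ t ∈ Icc 1 T, (gradR t).comp
        (∑ t' ∈ range t, (Φ t t').comp ((B t').comp (Dπ t')))‖ ≤ L ^ 3 * M * T ^ 2 * α ^ T :=
      (hbound T).trans <| by
        rw [mul_assoc _ (_ ^ 2)]
        exact mul_le_mul_of_nonneg_left (sum_Icc_sum_range_pow_sub_le_of_one_le h1 T) hC.le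
    refine ⟨L ^ 3 * M, hC, fun T => ⟨fun _ => hgrowth T, fun hα1 => ?_, fun h => absurd h h1.not_gt⟩⟩
    simpa [hα1] using hgrowth T
  · refine ⟨L ^ 3 * M * (1 - α)⁻¹, by have := sub_pos.mpr h1; positivity,
      fun T => ⟨fun h => absurd h h1.not_gt, fun h => absurd h h1.ne, fun _ => ?_⟩⟩
    refine (hbound T).trans ?_
    rw [mul_assoc _ (1 - α)⁻¹]
    exact mul_le_mul_of_nonneg_left (sum_Icc_sum_range_pow_sub_le_of_lt_one hα.le h1 T) hC.le
end
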